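/- Fix channel gains a > 0 and b > 0 and a correlation ρ ∈ (−1,1). Then f(P1,P2,ρ) is a monotonically increasing function of P1 on [0,∞) for every fixed P2 ≥ 0, and a monotonically increasing function of P2 on [0,∞) for every fixed P1 ≥ 0. -/
import Mathlib


/-- The function `f(P1, P2, ρ)` whose min-max gives the Sato-type upper bound for the
Gaussian wiretap channel with a helping interferer, with channel gains `a`, `b`. -/
noncomputable def f (a b P1 P2 ρ : ℝ) : ℝ :=
  (1 / 2) * Real.logb 2
    (((1 + P1 + b * P2) * (1 + a * P1 + P2) - (ρ + Real.sqrt a * P1 + Real.sqrt b * P2) ^ 2) /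
      ((1 - ρ ^ 2) * (1 + a * P1 + P2)))

private lemma num_pos (s t ρ P1 P2 : ℝ) (hs : 0 < s) (ht : 0 < t) (hρ : ρ ^ 2 < 1)
    (h1 : 0 ≤ P1) (h2 : 0 ≤ P2) :
    0 < (1 + P1 + t ^ 2 * P2) * (1 + s ^ 2 * P1 + P2) - (ρ + s * P1 + t * P2) ^ 2 := by
  nlinarith [sq_nonneg (s - ρ), sq_nonneg (t - ρ), sq_nonneg (1 - s * t),
    mul_nonneg h1 h2, mul_nonneg (mul_nonneg h1 h2) (sq_nonneg (1 - s * t)),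
    mul_nonneg h1 (sq_nonneg (s - ρ)), mul_nonneg h2 (sq_nonneg (t - ρ)),
    mul_nonneg h1 (le_of_lt (sub_pos.mpr hρ)), mul_nonneg h2 (le_of_lt (sub_pos.mpr hρ))]

/-- For fixed gains `a, b > 0` and `ρ ∈ (-1,1)`, `f(P1,P2,ρ)` is a monotonically
increasing function of `P1` on `[0,∞)` for each fixed `P2 ≥ 0`, and a monotonically
increasing function of `P2` on `[0,∞)` for each fixed `P1 ≥ 0`. -/
theorem stmt17 (a b ρ : ℝ) (ha : 0 < a) (hb : 0 < b) (hρ : ρ ∈ Set.Ioo (-1 : ℝ) 1) :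
    (∀ P2 : ℝ, 0 ≤ P2 → MonotoneOn (fun P1 => f a b P1 P2 ρ) (Set.Ici 0)) ∧
    (∀ P1 : ℝ, 0 ≤ P1 → MonotoneOn (fun P2 => f a b P1 P2 ρ) (Set.Ici 0)) := by
  obtain ⟨hρ1, hρ2⟩ := hρ
  have hρsq : ρ ^ 2 < 1 := by nlinarith
  set s := Real.sqrt a with hs_def
  set t := Real.sqrt b with ht_def
  have hs : 0 < s := Real.sqrt_pos.mpr ha
  have ht : 0 < t := Real.sqrt_pos.mpr hb
  have hsa : s ^ 2 = a := Real.sq_sqrt ha.le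
  have htb : t ^ 2 = b := Real.sq_sqrt hb.le
  have h9 : (1 : ℝ) < 2 := one_lt_two
  constructor
  · intro Q hQ x hx y hy hxy
    simp only [Set.mem_Ici] at hx hy
    simp only [f]
    have hDx : 0 < (1 - ρ ^ 2) * (1 + a * x + Q) := by nlinarith [mul_nonneg ha.le hx]
    have hDy : 0 < (1 - ρ ^ 2) * (1 + a * y + Q) := by nlinarith [mul_nonneg ha.le hy]
    have hNx : 0 < (1 + x + b * Q) * (1 + a * x + Q) - (ρ + s * x + t * Q) ^ 2 := by
      have := num_pos s t ρ x Q hs ht hρsq hx hQ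
      rw [hsa, htb] at this; linarith
    have hNy : 0 < (1 + y + b * Q) * (1 + a * y + Q) - (ρ + s * y + t * Q) ^ 2 := by
      have := num_pos s t ρ y Q hs ht hρsq hy hQ
      rw [hsa, htb] at this; linarith
    have hle : ((1 + x + b * Q) * (1 + a * x + Q) - (ρ + s * x + t * Q) ^ 2) /
        ((1 - ρ ^ 2) * (1 + a * x + Q)) ≤
        ((1 + y + b * Q) * (1 + a * y + Q) - (ρ + s * y + t * Q) ^ 2) /
        ((1 - ρ ^ 2) * (1 + a * y + Q)) := by
      rw [div_le_div_iff₀ hDx hDy]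
      rw [← hsa, ← htb]
      have hid : ((1 + y + t ^ 2 * Q) * (1 + s ^ 2 * y + Q) - (ρ + s * y + t * Q) ^ 2) *
          ((1 - ρ ^ 2) * (1 + s ^ 2 * x + Q)) -
          ((1 + x + t ^ 2 * Q) * (1 + s ^ 2 * x + Q) - (ρ + s * x + t * Q) ^ 2) *
          ((1 - ρ ^ 2) * (1 + s ^ 2 * y + Q)) =
          (1 - ρ ^ 2) * (y - x) * ((1 - s * t) * Q + (1 - ρ * s)) ^ 2 := by ring
      linarith [hid, mul_nonneg (mul_nonneg (sub_pos.mpr hρsq).le (sub_nonneg.mpr hxy))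
        (sq_nonneg ((1 - s * t) * Q + (1 - ρ * s)))]
    gcongr 1 / 2 * ?_
    exact Real.logb_le_logb_of_le h9 (div_pos hNx hDx) hle
  · intro P hP x hx y hy hxy
    simp only [Set.mem_Ici] at hx hy
    simp only [f]
    have hD : 0 < (1 - ρ ^ 2) * (1 + a * P + x) := by nlinarith [mul_nonneg ha.le hP]
    have hDy : 0 < (1 - ρ ^ 2) * (1 + a * P + y) := by nlinarith [mul_nonneg ha.le hP]
    have hNx : 0 < (1 + P + b * x) * (1 + a * P + x) - (ρ + s * P + t * x) ^ 2 := by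
      have := num_pos s t ρ P x hs ht hρsq hP hx
      rw [hsa, htb] at this; linarith
    have hNy : 0 < (1 + P + b * y) * (1 + a * P + y) - (ρ + s * P + t * y) ^ 2 := by
      have := num_pos s t ρ P y hs ht hρsq hP hy
      rw [hsa, htb] at this; linarith
    have hle : ((1 + P + b * x) * (1 + a * P + x) - (ρ + s * P + t * x) ^ 2) /
        ((1 - ρ ^ 2) * (1 + a * P + x)) ≤
        ((1 + P + b * y) * (1 + a * P + y) - (ρ + s * P + t * y) ^ 2) /
        ((1 - ρ ^ 2) * (1 + a * P + y)) := by
      rw [div_le_div_iff₀ hD hDy]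
      rw [← hsa, ← htb]
      have hid : ((1 + P + t ^ 2 * y) * (1 + s ^ 2 * P + y) - (ρ + s * P + t * y) ^ 2) *
          ((1 - ρ ^ 2) * (1 + s ^ 2 * P + x)) -
          ((1 + P + t ^ 2 * x) * (1 + s ^ 2 * P + x) - (ρ + s * P + t * x) ^ 2) *
          ((1 - ρ ^ 2) * (1 + s ^ 2 * P + y)) =
          (1 - ρ ^ 2) * (y - x) * (s * (s * t - 1) * P + (t - ρ)) ^ 2 := by ring
      linarith [hid, mul_nonneg (mul_nonneg (sub_pos.mpr hρsq).le (sub_nonneg.mpr hxy))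
        (sq_nonneg (s * (s * t - 1) * P + (t - ρ)))]
    gcongr 1 / 2 * ?_
    exact Real.logb_le_logb_of_le h9 (div_pos hNx hD) hle
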